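/- arXiv:1801.08809 — 2 statements merged into one kernel-verified Lean document; each statement's English description precedes it below -/
import Mathlib

section
/- Let λ > 0 and μ > 0 and C^{-1}σ := (1/(2μ))σ^D + (1/(n(nλ+2μ)))(tr σ)I on ℝ^{n×n}. Then the bilinear form (σ,τ) ↦ C^{-1}σ : τ is symmetric and satisfies |C^{-1}σ : τ| ≤ max(1/(2μ), 1/(nλ+2μ)) · ‖σ‖_F ‖τ‖_F, a bound that stays bounded as λ → ∞ (uniformly in λ ≥ 0). -/
open scoped BigOperators

noncomputable def frobInner {n : ℕ} (σ τ : Matrix (Fin n) (Fin n) ℝ) : ℝ :=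
  ∑ i, ∑ j, σ i j * τ i j

noncomputable def frobNorm {n : ℕ} (σ : Matrix (Fin n) (Fin n) ℝ) : ℝ :=
  Real.sqrt (frobInner σ σ)

noncomputable def dev {n : ℕ} (σ : Matrix (Fin n) (Fin n) ℝ) : Matrix (Fin n) (Fin n) ℝ :=
  σ - ((n : ℝ)⁻¹ * Matrix.trace σ) • (1 : Matrix (Fin n) (Fin n) ℝ)

noncomputable def hookeInv {n : ℕ} (l μ : ℝ) (σ : Matrix (Fin n) (Fin n) ℝ) :
    Matrix (Fin n) (Fin n) ℝ :=
  (1 / (2 * μ)) • dev σ +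
    ((1 / (n * (n * l + 2 * μ))) * Matrix.trace σ) • (1 : Matrix (Fin n) (Fin n) ℝ)

/-!
`C⁻¹` acts as `1/(2μ)` on deviators and as `1/(nλ+2μ)` on multiples of the identity, and these
two subspaces are Frobenius-orthogonal complements. Hence `C⁻¹` is self-adjoint and
`‖C⁻¹σ‖_F ≤ max(1/(2μ), 1/(nλ+2μ)) ‖σ‖_F`; the bound on the form then follows from
Cauchy–Schwarz.
-/

open Matrix

variable {n : ℕ}

section Frobenius

theorem frobInner_comm (σ τ : Matrix (Fin n) (Fin n) ℝ) : frobInner σ τ = frobInner τ σ := by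
  simp only [frobInner, mul_comm]

theorem frobInner_add_left (σ ρ τ : Matrix (Fin n) (Fin n) ℝ) :
    frobInner (σ + ρ) τ = frobInner σ τ + frobInner ρ τ := by
  simp [frobInner, add_mul, Finset.sum_add_distrib]

theorem frobInner_smul_left (c : ℝ) (σ τ : Matrix (Fin n) (Fin n) ℝ) :
    frobInner (c • σ) τ = c * frobInner σ τ := by
  simp [frobInner, Finset.mul_sum, mul_assoc]

theorem frobInner_sub_left (σ ρ τ : Matrix (Fin n) (Fin n) ℝ) :
    frobInner (σ - ρ) τ = frobInner σ τ - frobInner ρ τ := by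
  simp [frobInner, sub_mul, Finset.sum_sub_distrib]

theorem frobInner_add_right (σ τ ρ : Matrix (Fin n) (Fin n) ℝ) :
    frobInner σ (τ + ρ) = frobInner σ τ + frobInner σ ρ := by
  rw [frobInner_comm, frobInner_add_left, frobInner_comm τ, frobInner_comm ρ]

theorem frobInner_smul_right (c : ℝ) (σ τ : Matrix (Fin n) (Fin n) ℝ) :
    frobInner σ (c • τ) = c * frobInner σ τ := by
  rw [frobInner_comm, frobInner_smul_left, frobInner_comm]

theorem frobInner_one_left (τ : Matrix (Fin n) (Fin n) ℝ) : frobInner 1 τ = trace τ := by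
  simp [frobInner, one_apply, trace]

theorem frobInner_self_nonneg (σ : Matrix (Fin n) (Fin n) ℝ) : 0 ≤ frobInner σ σ :=
  Finset.sum_nonneg fun _ _ => Finset.sum_nonneg fun _ _ => mul_self_nonneg _

theorem abs_frobInner_le (σ τ : Matrix (Fin n) (Fin n) ℝ) :
    |frobInner σ τ| ≤ frobNorm σ * frobNorm τ := by
  have hsq : frobInner σ τ ^ 2 ≤ frobInner σ σ * frobInner τ τ := by
    simpa [frobInner, ← Finset.sum_product', pow_two] using
      Finset.sum_mul_sq_le_sq_mul_sq Finset.univ (fun p : Fin n × Fin n => σ p.1 p.2)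
        (fun p => τ p.1 p.2)
  calc |frobInner σ τ| = Real.sqrt (frobInner σ τ ^ 2) := (Real.sqrt_sq_eq_abs _).symm
    _ ≤ Real.sqrt (frobInner σ σ * frobInner τ τ) := Real.sqrt_le_sqrt hsq
    _ = frobNorm σ * frobNorm τ := Real.sqrt_mul (frobInner_self_nonneg σ) _

theorem frobNorm_le_of_frobInner_self_le {σ τ : Matrix (Fin n) (Fin n) ℝ} {c : ℝ}
    (hc : 0 ≤ c) (h : frobInner σ σ ≤ c ^ 2 * frobInner τ τ) :
    frobNorm σ ≤ c * frobNorm τ := by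
  rw [frobNorm, frobNorm, ← Real.sqrt_sq hc, ← Real.sqrt_mul (sq_nonneg c)]
  exact Real.sqrt_le_sqrt h

end Frobenius

section Decomposition

noncomputable def sph (σ : Matrix (Fin n) (Fin n) ℝ) : Matrix (Fin n) (Fin n) ℝ :=
  ((n : ℝ)⁻¹ * trace σ) • 1

theorem dev_add_sph (σ : Matrix (Fin n) (Fin n) ℝ) : dev σ + sph σ = σ :=
  sub_add_cancel σ _

-- For `n = 0` this holds because the trace of a `0 × 0` matrix vanishes (and `(0 : ℝ)⁻¹ = 0`).
theorem trace_dev (σ : Matrix (Fin n) (Fin n) ℝ) : trace (dev σ) = 0 := by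
  rcases Nat.eq_zero_or_pos n with rfl | hn
  · simp [trace]
  · have : (n : ℝ) ≠ 0 := by positivity
    rw [dev, trace_sub, trace_smul, trace_one, Fintype.card_fin, smul_eq_mul,
      mul_right_comm, inv_mul_cancel₀ this, one_mul, sub_self]

theorem frobInner_sph_left (σ τ : Matrix (Fin n) (Fin n) ℝ) :
    frobInner (sph σ) τ = (n : ℝ)⁻¹ * trace σ * trace τ := by
  rw [sph, frobInner_smul_left, frobInner_one_left]

theorem frobInner_dev_left (σ τ : Matrix (Fin n) (Fin n) ℝ) :
    frobInner (dev σ) τ = frobInner σ τ - (n : ℝ)⁻¹ * trace σ * trace τ := by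
  rw [dev, frobInner_sub_left, ← sph, frobInner_sph_left]

theorem frobInner_sph_dev (σ τ : Matrix (Fin n) (Fin n) ℝ) :
    frobInner (sph σ) (dev τ) = 0 := by
  rw [frobInner_sph_left, trace_dev, mul_zero]

theorem frobInner_self_smul_dev_add_smul_sph (a b : ℝ) (σ : Matrix (Fin n) (Fin n) ℝ) :
    frobInner (a • dev σ + b • sph σ) (a • dev σ + b • sph σ) =
      a ^ 2 * frobInner (dev σ) (dev σ) + b ^ 2 * frobInner (sph σ) (sph σ) := by
  have horth : frobInner (dev σ) (sph σ) = 0 := by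
    rw [frobInner_comm, frobInner_sph_dev]
  simp only [frobInner_add_left, frobInner_add_right, frobInner_smul_left,
    frobInner_smul_right, horth, frobInner_sph_dev]
  ring

theorem frobInner_self_eq_dev_add_sph (σ : Matrix (Fin n) (Fin n) ℝ) :
    frobInner σ σ = frobInner (dev σ) (dev σ) + frobInner (sph σ) (sph σ) := by
  conv_lhs => rw [← dev_add_sph σ, ← one_smul ℝ (dev σ), ← one_smul ℝ (sph σ)]
  rw [frobInner_self_smul_dev_add_smul_sph]
  ring

theorem frobNorm_smul_dev_add_smul_sph_le (a b : ℝ) (σ : Matrix (Fin n) (Fin n) ℝ) :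
    frobNorm (a • dev σ + b • sph σ) ≤ max |a| |b| * frobNorm σ := by
  refine frobNorm_le_of_frobInner_self_le (le_max_of_le_left (abs_nonneg a)) ?_
  have ha : a ^ 2 ≤ max |a| |b| ^ 2 := sq_le_sq' (by grind) (le_max_of_le_left (le_abs_self a))
  have hb : b ^ 2 ≤ max |a| |b| ^ 2 := sq_le_sq' (by grind) (le_max_of_le_right (le_abs_self b))
  rw [frobInner_self_smul_dev_add_smul_sph, frobInner_self_eq_dev_add_sph σ, mul_add]
  exact add_le_add (mul_le_mul_of_nonneg_right ha (frobInner_self_nonneg _))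
    (mul_le_mul_of_nonneg_right hb (frobInner_self_nonneg _))

end Decomposition

theorem hookeInv_eq (l μ : ℝ) (σ : Matrix (Fin n) (Fin n) ℝ) :
    hookeInv l μ σ = (1 / (2 * μ)) • dev σ + (1 / (n * l + 2 * μ)) • sph σ := by
  rw [hookeInv, sph, smul_smul]
  congr 2
  rw [mul_comm (n : ℝ), ← one_div_mul_one_div]
  ring

theorem frobInner_hookeInv_left (l μ : ℝ) (σ τ : Matrix (Fin n) (Fin n) ℝ) :
    frobInner (hookeInv l μ σ) τ =
      1 / (2 * μ) * frobInner σ τ +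
        (1 / (n * l + 2 * μ) - 1 / (2 * μ)) * ((n : ℝ)⁻¹ * trace σ * trace τ) := by
  rw [hookeInv_eq, frobInner_add_left, frobInner_smul_left, frobInner_smul_left,
    frobInner_dev_left, frobInner_sph_left]
  ring

theorem hookeInv_form_symm_bounded_general (n : ℕ) (l μ : ℝ)
    (hl : 0 < l) (hμ : 0 < μ) :
    (∀ σ τ : Matrix (Fin n) (Fin n) ℝ,
        frobInner (hookeInv l μ σ) τ = frobInner (hookeInv l μ τ) σ) ∧
    (∀ σ τ : Matrix (Fin n) (Fin n) ℝ,
        |frobInner (hookeInv l μ σ) τ| ≤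
          max (1 / (2 * μ)) (1 / (n * l + 2 * μ)) * frobNorm σ * frobNorm τ) ∧
    (∀ l' : ℝ, 0 ≤ l' →
        max (1 / (2 * μ)) (1 / (n * l' + 2 * μ)) ≤ 1 / (2 * μ)) := by
  refine ⟨fun σ τ => ?_, fun σ τ => ?_, fun l' hl' => ?_⟩
  · rw [frobInner_hookeInv_left, frobInner_hookeInv_left, frobInner_comm τ]
    ring
  · have hnorm := frobNorm_smul_dev_add_smul_sph_le (1 / (2 * μ)) (1 / (n * l + 2 * μ)) σ
    rw [← hookeInv_eq, abs_of_pos (by positivity), abs_of_pos (by positivity)] at hnorm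
    calc |frobInner (hookeInv l μ σ) τ| ≤ frobNorm (hookeInv l μ σ) * frobNorm τ :=
          abs_frobInner_le _ _
      _ ≤ _ := mul_le_mul_of_nonneg_right hnorm (Real.sqrt_nonneg _)
  · refine max_le le_rfl (one_div_le_one_div_of_le (by positivity) ?_)
    exact le_add_of_nonneg_left (by positivity)

/-- The bilinear form `(σ,τ) ↦ C⁻¹σ : τ` is symmetric, bounded by
`max(1/(2μ), 1/(nλ+2μ)) ‖σ‖_F ‖τ‖_F`, and this bound stays bounded
uniformly in λ ≥ 0 (it is at most `1/(2μ)`). -/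
theorem hookeInv_form_symm_bounded (n : ℕ) (hn : 1 ≤ n) (l μ : ℝ)
    (hl : 0 < l) (hμ : 0 < μ) :
    (∀ σ τ : Matrix (Fin n) (Fin n) ℝ,
        frobInner (hookeInv l μ σ) τ = frobInner (hookeInv l μ τ) σ) ∧
    (∀ σ τ : Matrix (Fin n) (Fin n) ℝ,
        |frobInner (hookeInv l μ σ) τ| ≤
          max (1 / (2 * μ)) (1 / (n * l + 2 * μ)) * frobNorm σ * frobNorm τ) ∧
    (∀ l' : ℝ, 0 ≤ l' →
        max (1 / (2 * μ)) (1 / (n * l' + 2 * μ)) ≤ 1 / (2 * μ)) :=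
  hookeInv_form_symm_bounded_general n l μ hl hμ
end

section
/- Let X be a Banach space, T : X → X a bounded linear operator, and z ∈ ℂ (or ℝ) with z ≠ 0. Suppose there is a constant c > 0 such that ‖(zI − T)y‖ ≥ c‖y‖ for all y in the range of T. Then for every x ∈ X, ‖(zI − T)x‖ ≥ (|z| c / (c + ‖T‖)) ‖x‖. -/
/-! Put `u = (zI - T)x`. Since `T` commutes with `zI - T`, the hypothesis applied to `x` reads
`c‖Tx‖ ≤ ‖Tu‖ ≤ ‖T‖‖u‖`, while `zx = u + Tx` gives `|z|‖x‖ ≤ ‖u‖ + ‖Tx‖`. Multiplying the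
latter by `c` and inserting the former yields `|z| c ‖x‖ ≤ (c + ‖T‖)‖u‖`. -/

namespace ContinuousLinearMap

variable {𝕜 E : Type*} [NontriviallyNormedField 𝕜] [SeminormedAddCommGroup E] [NormedSpace 𝕜 E]

theorem apply_smul_sub_apply (T : E →L[𝕜] E) (z : 𝕜) (x : E) :
    T (z • x - T x) = z • T x - T (T x) := by
  rw [map_sub, map_smul]

theorem norm_smul_le_norm_smul_sub_apply_add (T : E →L[𝕜] E) (z : 𝕜) (x : E) :
    ‖z‖ * ‖x‖ ≤ ‖z • x - T x‖ + ‖T x‖ := by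
  calc ‖z‖ * ‖x‖ = ‖(z • x - T x) + T x‖ := by rw [sub_add_cancel, norm_smul]
    _ ≤ ‖z • x - T x‖ + ‖T x‖ := norm_add_le _ _

theorem norm_mul_mul_norm_le_of_lower_bound_on_range (T : E →L[𝕜] E) (z : 𝕜) {c : ℝ}
    (hc : 0 ≤ c) (hrange : ∀ x : E, c * ‖T x‖ ≤ ‖z • T x - T (T x)‖) (x : E) :
    ‖z‖ * c * ‖x‖ ≤ (c + ‖T‖) * ‖z • x - T x‖ := by
  have hTx : c * ‖T x‖ ≤ ‖T‖ * ‖z • x - T x‖ :=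
    (apply_smul_sub_apply T z x ▸ hrange x).trans (T.le_opNorm _)
  calc ‖z‖ * c * ‖x‖ = c * (‖z‖ * ‖x‖) := by ring
    _ ≤ c * (‖z • x - T x‖ + ‖T x‖) :=
      mul_le_mul_of_nonneg_left (norm_smul_le_norm_smul_sub_apply_add T z x) hc
    _ ≤ (c + ‖T‖) * ‖z • x - T x‖ := by linarith

end ContinuousLinearMap

theorem resolvent_bound_from_range_general {X : Type*} [NormedAddCommGroup X]
    [NormedSpace ℝ X]
    (T : X →L[ℝ] X) (z : ℝ) (c : ℝ) (hc : 0 < c)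
    (hrange : ∀ x : X, c * ‖T x‖ ≤ ‖z • T x - T (T x)‖) :
    ∀ x : X, |z| * c / (c + ‖T‖) * ‖x‖ ≤ ‖z • x - T x‖ := by
  intro x
  have hpos : 0 < c + ‖T‖ := add_pos_of_pos_of_nonneg hc (norm_nonneg T)
  rw [div_mul_eq_mul_div, div_le_iff₀ hpos, mul_comm _ (c + ‖T‖), ← Real.norm_eq_abs]
  exact T.norm_mul_mul_norm_le_of_lower_bound_on_range z hc.le hrange x

/-- If `‖(zI - T)y‖ ≥ c‖y‖` for all `y` in the range of `T`, then for every `x`,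
`‖(zI - T)x‖ ≥ (|z| c / (c + ‖T‖)) ‖x‖`. -/
theorem resolvent_bound_from_range {X : Type*} [NormedAddCommGroup X]
    [NormedSpace ℝ X] [CompleteSpace X]
    (T : X →L[ℝ] X) (z : ℝ) (hz : z ≠ 0) (c : ℝ) (hc : 0 < c)
    (hrange : ∀ x : X, c * ‖T x‖ ≤ ‖z • T x - T (T x)‖) :
    ∀ x : X, |z| * c / (c + ‖T‖) * ‖x‖ ≤ ‖z • x - T x‖ :=
  resolvent_bound_from_range_general T z c hc hrange
end
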